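/- Let d ≥ 1, m ≠ 0, λ ≥ 0, and let h : ℝ^d × (0,∞) → ℝ be measurable with h(q;k) ≥ m² + ‖q‖² for all q and k. Define the update (Th)(p;k) = m² + ‖p‖² + (1/(2(2π)^d)) ∫_k^∞ ∫_{ℝ^d} [∂_{k'} r̄(q;k') / (h(q;k') + r̄(q;k'))²] · κ₄(p,−q,q;k') dq dk'. Then all integrals converge and for all p ∈ ℝ^d and k > 0: m² + ‖p‖² ≤ (Th)(p;k) ≤ m² + ‖p‖² + t_d · λ · m². -/

import Mathlib

open MeasureTheory

open Classical in
/-- The exponential regulator `r̄(q;k) = ‖q‖²/(exp(‖q‖²/k²) − 1)`, extended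
continuously by `r̄(0;k) = k²`. -/
noncomputable def rbar (d : ℕ) (q : EuclideanSpace ℝ (Fin d)) (k : ℝ) : ℝ :=
  if q = 0 then k ^ 2 else ‖q‖ ^ 2 / (Real.exp (‖q‖ ^ 2 / k ^ 2) - 1)

/-- The four-point function ansatz
`κ₄(p,q,r;k) = λ|m|^{4−d} exp[−(‖p‖^d + ‖q‖^d + ‖r‖^d + ‖p+q+r‖^d + |m|^d)/(k|m|^{d−1})]`. -/
noncomputable def kappa4 (d : ℕ) (m lam : ℝ) (p q r : EuclideanSpace ℝ (Fin d)) (k : ℝ) : ℝ :=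
  lam * |m| ^ ((4 : ℤ) - (d : ℤ)) *
    Real.exp (-((‖p‖ ^ d + ‖q‖ ^ d + ‖r‖ ^ d + ‖p + q + r‖ ^ d + |m| ^ d)
      / (k * |m| ^ ((d : ℤ) - 1))))

/-- The surface area `s_{d−1} = 2π^{d/2}/Γ(d/2)` of the unit `(d−1)`-sphere. -/
noncomputable def sSphere (d : ℕ) : ℝ :=
  2 * Real.pi ^ ((d : ℝ) / 2) / Real.Gamma ((d : ℝ) / 2)

/-- The constant `t_d = (2π)^{−d} π s_{d−1}/(8d)`. -/
noncomputable def tConst (d : ℕ) : ℝ :=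
  (2 * Real.pi) ^ (-(d : ℤ)) * Real.pi * sSphere d / (8 * d)

/-- The update map `(Th)(p;k) = m² + ‖p‖² + (1/(2(2π)^d)) ∫_k^∞ ∫_{ℝ^d}
[∂_{k'} r̄(q;k') / (h(q;k') + r̄(q;k'))²] · κ₄(p,−q,q;k') dq dk'`. -/
noncomputable def Tmap (d : ℕ) (m lam : ℝ) (h : EuclideanSpace ℝ (Fin d) → ℝ → ℝ)
    (p : EuclideanSpace ℝ (Fin d)) (k : ℝ) : ℝ :=
  m ^ 2 + ‖p‖ ^ 2 + (1 / (2 * (2 * Real.pi) ^ d)) *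
    ∫ k' in Set.Ioi k, ∫ q,
      (deriv (fun s => rbar d q s) k' / (h q k' + rbar d q k') ^ 2) *
        kappa4 d m lam p (-q) q k'

/-!
For `k > 0` one has `0 ≤ ∂ₖ r̄(q;k) ≤ 2k` and `r̄(q;k) + ‖q‖² ≥ k²`, so the denominator obeys
`h + r̄ ≥ m² + k²`; on the diagonal `κ₄(p,-q,q;k) ≤ λ|m|^{4-d} exp(-2‖q‖^d / (k|m|^{d-1}))`.
The integrand is therefore nonnegative and dominated by a radial function whose `q`-integral is
`λ s_{d-1} |m|³/d · k²/(k² + m²)²`, and `∫₀^∞ k²/(k² + m²)² dk = π/(4|m|)`.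
The prefactor `1/(2(2π)^d)` turns `λ s_{d-1} π m²/(4d)` into `t_d λ m²`.
-/

open Real Set Filter Topology Module

theorem sq_mul_exp_le_sq_exp_sub_one {x : ℝ} (hx : 0 ≤ x) : x ^ 2 * exp x ≤ (exp x - 1) ^ 2 := by
  have hsinh : x / 2 ≤ sinh (x / 2) := self_le_sinh_iff.mpr (by linarith)
  have hsplit : exp x - 1 = exp (x / 2) * (2 * sinh (x / 2)) := by
    rw [sinh_eq, mul_div_cancel₀ _ two_ne_zero, mul_sub, ← exp_add, ← exp_add]
    norm_num
  have hsq : exp (x / 2) ^ 2 = exp x := by rw [sq, ← exp_add, add_halves]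
  calc x ^ 2 * exp x = exp (x / 2) ^ 2 * (2 * (x / 2)) ^ 2 := by rw [hsq]; ring
    _ ≤ exp (x / 2) ^ 2 * (2 * sinh (x / 2)) ^ 2 := by gcongr
    _ = (exp x - 1) ^ 2 := by rw [hsplit]; ring

theorem exp_sub_one_le_mul_exp (x : ℝ) : exp x - 1 ≤ x * exp x := by
  have h := mul_le_mul_of_nonneg_left (add_one_le_exp (-x)) (exp_pos x).le
  rw [← exp_add, add_neg_cancel, exp_zero] at h
  linarith

open Classical in
noncomputable def rbarDeriv (d : ℕ) (q : EuclideanSpace ℝ (Fin d)) (k : ℝ) : ℝ :=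
  if q = 0 then 2 * k else
    2 * ‖q‖ ^ 4 * exp (‖q‖ ^ 2 / k ^ 2) / (k ^ 3 * (exp (‖q‖ ^ 2 / k ^ 2) - 1) ^ 2)

section Regulator

variable {d : ℕ} {q : EuclideanSpace ℝ (Fin d)} {k : ℝ}

theorem hasDerivAt_rbar (hk : k ≠ 0) : HasDerivAt (fun s => rbar d q s) (rbarDeriv d q k) k := by
  by_cases hq : q = 0
  · simp only [rbar, rbarDeriv, hq, if_true]
    simpa using hasDerivAt_pow 2 k
  · simp only [rbar, rbarDeriv, hq, if_false]
    have hexp : exp (‖q‖ ^ 2 / k ^ 2) - 1 ≠ 0 :=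
      (sub_pos.mpr (one_lt_exp_iff.mpr (by positivity))).ne'
    have hx : HasDerivAt (fun s : ℝ => ‖q‖ ^ 2 / s ^ 2) (-(2 * ‖q‖ ^ 2) / k ^ 3) k := by
      refine ((hasDerivAt_const k (‖q‖ ^ 2)).div (hasDerivAt_pow 2 k)
        (pow_ne_zero 2 hk)).congr_deriv ?_
      field_simp
      ring
    refine ((hasDerivAt_const k (‖q‖ ^ 2)).div
      (((hasDerivAt_exp _).comp k hx).sub_const 1) hexp).congr_deriv ?_
    simp only [Function.comp_apply]
    field_simp
    ring

theorem deriv_rbar (hk : k ≠ 0) : deriv (fun s => rbar d q s) k = rbarDeriv d q k :=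
  (hasDerivAt_rbar hk).deriv

theorem rbarDeriv_nonneg (hk : 0 ≤ k) : 0 ≤ rbarDeriv d q k := by
  unfold rbarDeriv
  split_ifs <;> positivity

theorem rbarDeriv_le (hk : 0 < k) : rbarDeriv d q k ≤ 2 * k := by
  unfold rbarDeriv
  split_ifs with hq
  · rfl
  · set x := ‖q‖ ^ 2 / k ^ 2 with hx
    have hq4 : ‖q‖ ^ 4 = k ^ 4 * x ^ 2 := by rw [hx]; field_simp
    have hexp : 0 < exp x - 1 := sub_pos.mpr (one_lt_exp_iff.mpr (by positivity))
    rw [div_le_iff₀ (by positivity), hq4]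
    nlinarith [sq_mul_exp_le_sq_exp_sub_one (x := x) (by positivity), pow_pos hk 4]

theorem sq_le_rbar_add_norm_sq (hk : k ≠ 0) : k ^ 2 ≤ rbar d q k + ‖q‖ ^ 2 := by
  unfold rbar
  split_ifs with hq
  · simp [hq]
  · set x := ‖q‖ ^ 2 / k ^ 2 with hx
    have hq2 : ‖q‖ ^ 2 = k ^ 2 * x := by rw [hx]; field_simp
    have hexp : 0 < exp x - 1 := sub_pos.mpr (one_lt_exp_iff.mpr (by positivity))
    rw [hq2, ← sub_nonneg]
    have key : k ^ 2 * x / (exp x - 1) + k ^ 2 * x - k ^ 2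
        = k ^ 2 * ((x * exp x - (exp x - 1)) / (exp x - 1)) := by
      field_simp
      ring
    have hnum : 0 ≤ x * exp x - (exp x - 1) := by linarith [exp_sub_one_le_mul_exp x]
    rw [key]
    positivity

theorem measurable_uncurry_rbar : Measurable (Function.uncurry (rbar d)) := by
  refine Measurable.ite (measurable_fst (measurableSet_singleton 0)) ?_ ?_ <;> fun_prop

theorem measurable_uncurry_rbarDeriv : Measurable (Function.uncurry (rbarDeriv d)) := by
  refine Measurable.ite (measurable_fst (measurableSet_singleton 0)) ?_ ?_ <;> fun_prop

end Regulator

theorem integral_Ioi_pow_pred_mul_exp_neg_mul_pow {n : ℕ} (hn : 0 < n) {b : ℝ} (hb : 0 < b) :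
    ∫ y in Ioi (0 : ℝ), y ^ (n - 1) * exp (-(b * y ^ n)) = 1 / (b * n) := by
  have hn' : (0 : ℝ) < n := Nat.cast_pos.mpr hn
  have := integral_rpow_mul_exp_neg_mul_rpow hn' (q := n - 1) (by linarith) hb
  rw [sub_add_cancel, div_self hn'.ne', neg_div_self hn'.ne', rpow_neg_one, Gamma_one,
    ← Nat.cast_pred hn] at this
  simp only [rpow_natCast, neg_mul] at this
  rw [this]
  field_simp

theorem integral_exp_neg_mul_norm_pow_finrank {E : Type*} [NormedAddCommGroup E]
    [NormedSpace ℝ E] [FiniteDimensional ℝ E] [Nontrivial E] [MeasurableSpace E] [BorelSpace E]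
    (μ : Measure E) [μ.IsAddHaarMeasure] {b : ℝ} (hb : 0 < b) :
    ∫ x, exp (-(b * ‖x‖ ^ finrank ℝ E)) ∂μ = μ.real (Metric.ball 0 1) / b := by
  have hn : (0 : ℝ) < finrank ℝ E := Nat.cast_pos.mpr finrank_pos
  rw [integral_fun_norm_addHaar μ (fun r => exp (-(b * r ^ finrank ℝ E)))]
  simp only [smul_eq_mul, nsmul_eq_mul]
  rw [integral_Ioi_pow_pred_mul_exp_neg_mul_pow finrank_pos hb]
  field_simp

theorem integrable_exp_neg_mul_norm_pow_finrank {E : Type*} [NormedAddCommGroup E]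
    [NormedSpace ℝ E] [FiniteDimensional ℝ E] [Nontrivial E] [MeasurableSpace E] [BorelSpace E]
    (μ : Measure E) [μ.IsAddHaarMeasure] {b : ℝ} (hb : 0 < b) :
    Integrable (fun x => exp (-(b * ‖x‖ ^ finrank ℝ E))) μ := by
  refine .of_integral_ne_zero ?_
  rw [integral_exp_neg_mul_norm_pow_finrank μ hb]
  have : 0 < μ.real (Metric.ball 0 1) :=
    ENNReal.toReal_pos (Metric.measure_ball_pos μ 0 one_pos).ne' measure_ball_lt_top.ne
  positivity

theorem sSphere_nonneg (d : ℕ) : 0 ≤ sSphere d :=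
  div_nonneg (by positivity) (Gamma_nonneg_of_nonneg (by positivity))

theorem sSphere_eq_mul_volume_ball {d : ℕ} (hd : 0 < d) :
    sSphere d = d * volume.real (Metric.ball (0 : EuclideanSpace ℝ (Fin d)) 1) := by
  have : Nonempty (Fin d) := ⟨⟨0, hd⟩⟩
  rw [measureReal_def, EuclideanSpace.volume_ball, Fintype.card_fin,
    ENNReal.ofReal_one, one_pow, one_mul, ENNReal.toReal_ofReal (by positivity),
    Gamma_add_one (by positivity), sSphere, sqrt_eq_rpow, ← rpow_natCast, ← rpow_mul pi_pos.le]
  field_simp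

theorem integral_exp_neg_mul_norm_pow {d : ℕ} (hd : 0 < d) {b : ℝ} (hb : 0 < b) :
    ∫ q : EuclideanSpace ℝ (Fin d), exp (-(b * ‖q‖ ^ d)) = sSphere d / (b * d) := by
  have : Nontrivial (EuclideanSpace ℝ (Fin d)) :=
    Module.nontrivial_of_finrank_pos (R := ℝ) (by rwa [finrank_euclideanSpace_fin])
  have := integral_exp_neg_mul_norm_pow_finrank (E := EuclideanSpace ℝ (Fin d)) volume hb
  rw [finrank_euclideanSpace_fin] at this
  rw [this, sSphere_eq_mul_volume_ball hd]
  field_simp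

theorem integrable_exp_neg_mul_norm_pow {d : ℕ} (hd : 0 < d) {b : ℝ} (hb : 0 < b) :
    Integrable fun q : EuclideanSpace ℝ (Fin d) => exp (-(b * ‖q‖ ^ d)) := by
  have : Nontrivial (EuclideanSpace ℝ (Fin d)) :=
    Module.nontrivial_of_finrank_pos (R := ℝ) (by rwa [finrank_euclideanSpace_fin])
  simpa only [finrank_euclideanSpace_fin] using
    integrable_exp_neg_mul_norm_pow_finrank (E := EuclideanSpace ℝ (Fin d)) volume hb

theorem hasDerivAt_arctan_div_sub_div {a : ℝ} (ha : a ≠ 0) (t : ℝ) :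
    HasDerivAt (fun s => arctan (s / a) / (2 * a) - s / (2 * (s ^ 2 + a ^ 2)))
      (t ^ 2 / (t ^ 2 + a ^ 2) ^ 2) t := by
  have harctan := ((hasDerivAt_id t).div_const a).arctan.div_const (2 * a)
  have hquot := (hasDerivAt_id t).div (((hasDerivAt_pow 2 t).add_const (a ^ 2)).const_mul 2)
    (by positivity)
  refine (harctan.sub hquot).congr_deriv ?_
  simp only [id]
  field_simp
  ring

theorem tendsto_arctan_div_sub_div {a : ℝ} (ha : 0 < a) :
    Tendsto (fun s => arctan (s / a) / (2 * a) - s / (2 * (s ^ 2 + a ^ 2))) atTop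
      (𝓝 (π / (4 * a))) := by
  have harctan : Tendsto (fun s => arctan (s / a) / (2 * a)) atTop (𝓝 (π / 2 / (2 * a))) :=
    ((tendsto_arctan_atTop.mono_right nhdsWithin_le_nhds).comp
      (tendsto_id.atTop_div_const ha)).div_const _
  have hquot : Tendsto (fun s : ℝ => s / (2 * (s ^ 2 + a ^ 2))) atTop (𝓝 0) := by
    refine squeeze_zero' (g := fun s => (2 * s)⁻¹) ?_ ?_ ?_
    · filter_upwards [eventually_ge_atTop 0] with s hs
      positivity
    · filter_upwards [eventually_gt_atTop 0] with s hs
      rw [inv_eq_one_div, div_le_div_iff₀ (by positivity) (by positivity)]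
      nlinarith
    · exact tendsto_inv_atTop_zero.comp (tendsto_id.const_mul_atTop two_pos)
  convert harctan.sub hquot using 2
  ring

theorem integrableOn_Ioi_sq_div_sq_add_sq_sq {a : ℝ} (ha : 0 < a) :
    IntegrableOn (fun t => t ^ 2 / (t ^ 2 + a ^ 2) ^ 2) (Ioi 0) :=
  integrableOn_Ioi_deriv_of_nonneg' (fun t _ => hasDerivAt_arctan_div_sub_div ha.ne' t)
    (fun t _ => by positivity) (tendsto_arctan_div_sub_div ha)

theorem integral_Ioi_sq_div_sq_add_sq_sq {a : ℝ} (ha : 0 < a) :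
    ∫ t in Ioi 0, t ^ 2 / (t ^ 2 + a ^ 2) ^ 2 = π / (4 * a) := by
  rw [integral_Ioi_of_hasDerivAt_of_nonneg' (fun t _ => hasDerivAt_arctan_div_sub_div ha.ne' t)
    (fun t _ => by positivity) (tendsto_arctan_div_sub_div ha)]
  simp

section FourPoint

variable {d : ℕ} {m lam : ℝ} {p q : EuclideanSpace ℝ (Fin d)} {k : ℝ}

theorem kappa4_nonneg (hlam : 0 ≤ lam) (r : EuclideanSpace ℝ (Fin d)) :
    0 ≤ kappa4 d m lam p q r k := by
  unfold kappa4
  positivity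

theorem kappa4_neg_self_le (hlam : 0 ≤ lam) (hk : 0 ≤ k) :
    kappa4 d m lam p (-q) q k ≤
      lam * |m| ^ ((4 : ℤ) - d) * exp (-(2 / (k * |m| ^ ((d : ℤ) - 1)) * ‖q‖ ^ d)) := by
  unfold kappa4
  refine mul_le_mul_of_nonneg_left (exp_le_exp.mpr (neg_le_neg ?_)) (by positivity)
  rw [neg_add_cancel_right, norm_neg, div_mul_eq_mul_div]
  refine div_le_div_of_nonneg_right ?_ (by positivity)
  linarith [pow_nonneg (norm_nonneg p) d, pow_nonneg (abs_nonneg m) d]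

end FourPoint

/-- The integrand of `Tmap` with `deriv` replaced by its closed form `rbarDeriv`: the two agree
for `k ≠ 0` (`deriv_rbar`), and only the latter is visibly jointly measurable in `(k, q)`. -/
noncomputable def flowIntegrand (d : ℕ) (m lam : ℝ) (h : EuclideanSpace ℝ (Fin d) → ℝ → ℝ)
    (p : EuclideanSpace ℝ (Fin d)) (k : ℝ) (q : EuclideanSpace ℝ (Fin d)) : ℝ :=
  rbarDeriv d q k / (h q k + rbar d q k) ^ 2 * kappa4 d m lam p (-q) q k

section Flow

variable {d : ℕ} {m lam : ℝ} {h : EuclideanSpace ℝ (Fin d) → ℝ → ℝ}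
  {p : EuclideanSpace ℝ (Fin d)} {k : ℝ}

theorem flowIntegrand_nonneg (hlam : 0 ≤ lam) (hk : 0 ≤ k) (q : EuclideanSpace ℝ (Fin d)) :
    0 ≤ flowIntegrand d m lam h p k q :=
  mul_nonneg (div_nonneg (rbarDeriv_nonneg hk) (sq_nonneg _)) (kappa4_nonneg hlam q)

theorem flowIntegrand_le (hlam : 0 ≤ lam) (hk : 0 < k)
    (hlow : ∀ q, m ^ 2 + ‖q‖ ^ 2 ≤ h q k) (q : EuclideanSpace ℝ (Fin d)) :
    flowIntegrand d m lam h p k q ≤ 2 * k / (m ^ 2 + k ^ 2) ^ 2 * (lam * |m| ^ ((4 : ℤ) - d)) *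
      exp (-(2 / (k * |m| ^ ((d : ℤ) - 1)) * ‖q‖ ^ d)) := by
  have hden : m ^ 2 + k ^ 2 ≤ h q k + rbar d q k := by
    linarith [hlow q, sq_le_rbar_add_norm_sq (d := d) (q := q) hk.ne']
  rw [mul_assoc]
  refine mul_le_mul ?_ (kappa4_neg_self_le hlam hk.le) (kappa4_nonneg hlam q) (by positivity)
  exact div_le_div₀ (by positivity) (rbarDeriv_le hk) (by positivity) (by gcongr)

theorem measurable_uncurry_flowIntegrand (hmeas : Measurable (Function.uncurry h)) :
    Measurable (Function.uncurry (flowIntegrand d m lam h p)) := by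
  have hh : Measurable fun x : ℝ × EuclideanSpace ℝ (Fin d) => h x.2 x.1 :=
    hmeas.comp measurable_swap
  have hrbar : Measurable fun x : ℝ × EuclideanSpace ℝ (Fin d) => rbar d x.2 x.1 :=
    measurable_uncurry_rbar.comp measurable_swap
  have hrbarDeriv : Measurable fun x : ℝ × EuclideanSpace ℝ (Fin d) => rbarDeriv d x.2 x.1 :=
    measurable_uncurry_rbarDeriv.comp measurable_swap
  have hkappa : Measurable fun x : ℝ × EuclideanSpace ℝ (Fin d) =>
      kappa4 d m lam p (-x.2) x.2 x.1 := by
    unfold kappa4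
    fun_prop
  exact (hrbarDeriv.div ((hh.add hrbar).pow_const 2)).mul hkappa

theorem integrable_flowIntegrand (hd : 0 < d) (hm : m ≠ 0) (hlam : 0 ≤ lam) (hk : 0 < k)
    (hlow : ∀ q, m ^ 2 + ‖q‖ ^ 2 ≤ h q k) (hmeas : Measurable (Function.uncurry h)) :
    Integrable (flowIntegrand d m lam h p k) := by
  have hb : 0 < 2 / (k * |m| ^ ((d : ℤ) - 1)) := by positivity
  refine ((integrable_exp_neg_mul_norm_pow hd hb).const_mul
    (2 * k / (m ^ 2 + k ^ 2) ^ 2 * (lam * |m| ^ ((4 : ℤ) - d)))).mono'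
    (measurable_uncurry_flowIntegrand hmeas).of_uncurry_left.aestronglyMeasurable
    (Eventually.of_forall fun q => ?_)
  rw [norm_of_nonneg (flowIntegrand_nonneg hlam hk.le q)]
  exact flowIntegrand_le hlam hk hlow q

theorem integral_flowIntegrand_le (hd : 0 < d) (hm : m ≠ 0) (hlam : 0 ≤ lam) (hk : 0 < k)
    (hlow : ∀ q, m ^ 2 + ‖q‖ ^ 2 ≤ h q k) :
    ∫ q, flowIntegrand d m lam h p k q ≤
      lam * sSphere d / d * |m| ^ 3 * (k ^ 2 / (k ^ 2 + |m| ^ 2) ^ 2) := by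
  have hm' : 0 < |m| := abs_pos.mpr hm
  have hb : 0 < 2 / (k * |m| ^ ((d : ℤ) - 1)) := by positivity
  have hpow : |m| ^ ((4 : ℤ) - d) * |m| ^ ((d : ℤ) - 1) = |m| ^ 3 := by
    rw [← zpow_add₀ hm'.ne']
    norm_num
  calc ∫ q, flowIntegrand d m lam h p k q
      ≤ ∫ q : EuclideanSpace ℝ (Fin d), 2 * k / (m ^ 2 + k ^ 2) ^ 2 * (lam * |m| ^ ((4 : ℤ) - d)) *
          exp (-(2 / (k * |m| ^ ((d : ℤ) - 1)) * ‖q‖ ^ d)) :=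
        integral_mono_of_nonneg
          (Eventually.of_forall (flowIntegrand_nonneg hlam hk.le))
          ((integrable_exp_neg_mul_norm_pow hd hb).const_mul _)
          (Eventually.of_forall (flowIntegrand_le hlam hk hlow))
    _ = lam * sSphere d / d * |m| ^ 3 * (k ^ 2 / (k ^ 2 + |m| ^ 2) ^ 2) := by
        rw [integral_const_mul, integral_exp_neg_mul_norm_pow hd hb, ← hpow,
          sq_abs]
        field_simp
        ring

theorem integrableOn_integral_flowIntegrand (hd : 0 < d) (hm : m ≠ 0) (hlam : 0 ≤ lam)
    (hk : 0 < k) (hlow : ∀ q k', k < k' → m ^ 2 + ‖q‖ ^ 2 ≤ h q k')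
    (hmeas : Measurable (Function.uncurry h)) :
    IntegrableOn (fun k' => ∫ q, flowIntegrand d m lam h p k' q) (Ioi k) := by
  have hmeas_int : StronglyMeasurable fun k' => ∫ q, flowIntegrand d m lam h p k' q :=
    (measurable_uncurry_flowIntegrand hmeas).stronglyMeasurable.integral_prod_right
  refine (IntegrableOn.mono_set ((integrableOn_Ioi_sq_div_sq_add_sq_sq (abs_pos.mpr hm)).const_mul
    (lam * sSphere d / d * |m| ^ 3)) (Ioi_subset_Ioi hk.le)).mono' hmeas_int.aestronglyMeasurable
    ((ae_restrict_iff' measurableSet_Ioi).mpr (Eventually.of_forall fun k' hkk' => ?_))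
  have hk' : 0 < k' := hk.trans hkk'
  rw [norm_of_nonneg (integral_nonneg (flowIntegrand_nonneg hlam hk'.le))]
  exact integral_flowIntegrand_le hd hm hlam hk' fun q => hlow q k' hkk'

theorem setIntegral_integral_flowIntegrand_le (hd : 0 < d) (hm : m ≠ 0) (hlam : 0 ≤ lam)
    (hk : 0 < k) (hlow : ∀ q k', k < k' → m ^ 2 + ‖q‖ ^ 2 ≤ h q k') :
    ∫ k' in Ioi k, ∫ q, flowIntegrand d m lam h p k' q ≤ π * lam * sSphere d * m ^ 2 / (4 * d) := by
  have hm' : 0 < |m| := abs_pos.mpr hm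
  set c := lam * sSphere d / d * |m| ^ 3 with hc
  have hc_nonneg : 0 ≤ c := by
    have := sSphere_nonneg d
    positivity
  have hg : IntegrableOn (fun t => c * (t ^ 2 / (t ^ 2 + |m| ^ 2) ^ 2)) (Ioi 0) :=
    (integrableOn_Ioi_sq_div_sq_add_sq_sq hm').const_mul c
  calc ∫ k' in Ioi k, ∫ q, flowIntegrand d m lam h p k' q
      ≤ ∫ k' in Ioi k, c * (k' ^ 2 / (k' ^ 2 + |m| ^ 2) ^ 2) :=
        integral_mono_of_nonneg
          ((ae_restrict_iff' measurableSet_Ioi).mpr (Eventually.of_forall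
            fun k' hk' => integral_nonneg
              (flowIntegrand_nonneg hlam (hk.trans hk').le)))
          (hg.mono_set (Ioi_subset_Ioi hk.le))
          ((ae_restrict_iff' measurableSet_Ioi).mpr (Eventually.of_forall
            fun k' hk' => integral_flowIntegrand_le hd hm hlam (hk.trans hk')
              fun q => hlow q k' hk'))
    _ ≤ ∫ k' in Ioi 0, c * (k' ^ 2 / (k' ^ 2 + |m| ^ 2) ^ 2) :=
        setIntegral_mono_set hg (Eventually.of_forall fun t => by positivity)
          (Ioi_subset_Ioi hk.le).eventuallyLE
    _ = π * lam * sSphere d * m ^ 2 / (4 * d) := by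
        rw [integral_const_mul, integral_Ioi_sq_div_sq_add_sq_sq hm', hc]
        field_simp
        rw [← sq_abs m]

end Flow

theorem stmt_7 (d : ℕ) (hd : 1 ≤ d) (m lam : ℝ) (hm : m ≠ 0) (hlam : 0 ≤ lam)
    (h : EuclideanSpace ℝ (Fin d) → ℝ → ℝ)
    (hmeas : Measurable (Function.uncurry h))
    (hlow : ∀ q : EuclideanSpace ℝ (Fin d), ∀ k : ℝ, 0 < k → m ^ 2 + ‖q‖ ^ 2 ≤ h q k) :
    ∀ (p : EuclideanSpace ℝ (Fin d)) (k : ℝ), 0 < k →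
      (∀ k' : ℝ, k < k' →
        Integrable (fun q : EuclideanSpace ℝ (Fin d) =>
          (deriv (fun s => rbar d q s) k' / (h q k' + rbar d q k') ^ 2) *
            kappa4 d m lam p (-q) q k')) ∧
      IntegrableOn (fun k' : ℝ => ∫ q,
          (deriv (fun s => rbar d q s) k' / (h q k' + rbar d q k') ^ 2) *
            kappa4 d m lam p (-q) q k') (Set.Ioi k) ∧
      m ^ 2 + ‖p‖ ^ 2 ≤ Tmap d m lam h p k ∧
      Tmap d m lam h p k ≤ m ^ 2 + ‖p‖ ^ 2 + tConst d * lam * m ^ 2 := by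
  intro p k hk
  have hlow' : ∀ q k', k < k' → m ^ 2 + ‖q‖ ^ 2 ≤ h q k' :=
    fun q k' hk' => hlow q k' (hk.trans hk')
  have hderiv : ∀ k' ∈ Ioi k, (fun q => deriv (fun s => rbar d q s) k' /
      (h q k' + rbar d q k') ^ 2 * kappa4 d m lam p (-q) q k') = flowIntegrand d m lam h p k' :=
    fun k' hk' => funext fun q => by rw [flowIntegrand, deriv_rbar (hk.trans hk').ne']
  have hT : Tmap d m lam h p k = m ^ 2 + ‖p‖ ^ 2 +
      1 / (2 * (2 * π) ^ d) * ∫ k' in Ioi k, ∫ q, flowIntegrand d m lam h p k' q := by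
    rw [Tmap, setIntegral_congr_fun measurableSet_Ioi fun k' hk' => by rw [hderiv k' hk']]
  have hI_nonneg : 0 ≤ ∫ k' in Ioi k, ∫ q, flowIntegrand d m lam h p k' q :=
    setIntegral_nonneg measurableSet_Ioi fun k' hk' =>
      integral_nonneg (flowIntegrand_nonneg hlam (hk.trans hk').le)
  have hconst : 1 / (2 * (2 * π) ^ d) * (π * lam * sSphere d * m ^ 2 / (4 * d)) =
      tConst d * lam * m ^ 2 := by
    rw [tConst, zpow_neg, zpow_natCast]
    field_simp
    ring
  refine ⟨fun k' hk' => ?_, ?_, ?_, ?_⟩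
  · rw [hderiv k' hk']
    exact integrable_flowIntegrand hd hm hlam (hk.trans hk') (fun q => hlow' q k' hk') hmeas
  · exact (integrableOn_integral_flowIntegrand (p := p) hd hm hlam hk hlow' hmeas).congr_fun
      (fun k' hk' => by rw [hderiv k' hk']) measurableSet_Ioi
  · rw [hT]
    exact le_add_of_nonneg_right (mul_nonneg (by positivity) hI_nonneg)
  · rw [hT, ← hconst]
    gcongr
    exact setIntegral_integral_flowIntegrand_le hd hm hlam hk hlow'
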